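/- Let f : A → B be a unital *-homomorphism of unital C*-algebras such that for every C ∈ 𝒞(A) the image f[C] is closed in B (hence f[C] is a commutative unital closed *-subalgebra of B). Let P := ⨿_{C ∈ 𝒞(A)} Σ_{f[C]}, and call a subset V ⊆ P admissible if (i) each V_C := {λ ∈ Σ_{f[C]} : (C,λ) ∈ V} is open in Σ_{f[C]}, and (ii) whenever (C,λ) ∈ V and D ⊆ C in 𝒞(A), then (D, λ∘ι) ∈ V, where ι : f[D] ↪ f[C] is the inclusion. Define Φ : P → Σ_e by Φ(C,λ) = (C, λ∘(f|_C)), where f|_C : C → f[C] is the corestriction of f. Then for every Σ↓-open subset U ⊆ Σ_e, the preimage Φ⁻¹(U) is admissible; that is, Φ is continuous for the corresponding topologies. -/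
import Mathlib


open scoped ComplexOrder

noncomputable section

/-- A character of a commutative unital *-subalgebra: a unital *-algebra homomorphism
to `ℂ`. -/
abbrev Character {E : Type*} [Ring E] [StarRing E] [Algebra ℂ E] [StarModule ℂ E]
    (C : StarSubalgebra ℂ E) : Type _ := C →⋆ₐ[ℂ] ℂ

/-- The topology of pointwise convergence on characters (the Gelfand topology). -/
instance {E : Type*} [Ring E] [StarRing E] [Algebra ℂ E] [StarModule ℂ E]
    (C : StarSubalgebra ℂ E) : TopologicalSpace (Character C) :=
  TopologicalSpace.induced (fun φ => (φ : C → ℂ)) inferInstance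

/-- The restriction map `ρ_{CD}` on characters along an inclusion of subalgebras. -/
def resChar {E : Type*} [Ring E] [StarRing E] [Algebra ℂ E] [StarModule ℂ E]
    {C D : StarSubalgebra ℂ E} (h : D ≤ C) (φ : Character C) : Character D :=
  φ.comp (StarSubalgebra.inclusion h)

variable (A B : Type*)
  [NormedRing A] [StarRing A] [CStarRing A] [NormedAlgebra ℂ A] [StarModule ℂ A]
  [CompleteSpace A]
  [NormedRing B] [StarRing B] [CStarRing B] [NormedAlgebra ℂ B] [StarModule ℂ B]
  [CompleteSpace B]

/-- A context of the unital C*-algebra `A`: a commutative unital closed *-subalgebra. -/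
structure Ctx where
  alg : StarSubalgebra ℂ A
  closed : IsClosed (alg : Set A)
  comm : ∀ x ∈ alg, ∀ y ∈ alg, x * y = y * x

/-- The disjoint union `Σ_e = ⨿_{C ∈ 𝒞(A)} Σ_C`. -/
abbrev SigmaE := Σ C : Ctx A, Character C.alg

variable {A}

/-- A subset `U ⊆ Σ_e` is Σ↓-open if every `U_C` is open in `Σ_C` and `U` is closed under
restriction of characters. -/
def IsSigmaDownOpen (U : Set (SigmaE A)) : Prop :=
  (∀ C : Ctx A, IsOpen {φ : Character C.alg | (⟨C, φ⟩ : SigmaE A) ∈ U}) ∧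
  (∀ C D : Ctx A, ∀ h : D.alg ≤ C.alg, ∀ φ : Character C.alg,
    (⟨C, φ⟩ : SigmaE A) ∈ U → (⟨D, resChar h φ⟩ : SigmaE A) ∈ U)

variable {B}

/-- The total space `P = ⨿_{C ∈ 𝒞(A)} Σ_{f[C]}`. -/
abbrev TotalP (f : A →⋆ₐ[ℂ] B) := Σ C : Ctx A, Character (C.alg.map f)

/-- A subset `V ⊆ P` is admissible if each `V_C` is open in `Σ_{f[C]}` and `V` is closed
under restriction of characters along the inclusions `f[D] ⊆ f[C]` for `D ⊆ C`. -/
def Admissible {f : A →⋆ₐ[ℂ] B} (V : Set (TotalP f)) : Prop :=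
  (∀ C : Ctx A, IsOpen {φ : Character (C.alg.map f) | (⟨C, φ⟩ : TotalP f) ∈ V}) ∧
  (∀ C D : Ctx A, ∀ h : D.alg ≤ C.alg, ∀ φ : Character (C.alg.map f),
    (⟨C, φ⟩ : TotalP f) ∈ V →
      (⟨D, resChar (StarSubalgebra.map_mono h) φ⟩ : TotalP f) ∈ V)

/-- The corestriction `f|_C : C → f[C]` of `f` to a subalgebra `C`. -/
def corestrict (f : A →⋆ₐ[ℂ] B) (C : StarSubalgebra ℂ A) : C →⋆ₐ[ℂ] (C.map f) :=
  StarAlgHom.codRestrict (f.comp C.subtype) (C.map f)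
    (fun x => StarSubalgebra.mem_map.mpr ⟨(x : A), x.2, rfl⟩)

/-- The map `Φ : P → Σ_e`, `(C, λ) ↦ (C, λ ∘ f|_C)`. -/
def PhiMap (f : A →⋆ₐ[ℂ] B) (z : TotalP f) : SigmaE A :=
  ⟨z.1, z.2.comp (corestrict f z.1.alg)⟩

/-- For a unital *-homomorphism `f : A → B` of unital C*-algebras with all
images `f[C]` closed, the map `Φ : (C,λ) ↦ (C, λ∘f|_C)` pulls back Σ↓-open sets to admissible
sets; i.e. `Φ` is continuous for the corresponding topologies. -/
theorem phi_continuous (f : A →⋆ₐ[ℂ] B)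
    (hclosed : ∀ C : Ctx A, IsClosed ((C.alg.map f : StarSubalgebra ℂ B) : Set B)) :
    ∀ U : Set (SigmaE A), IsSigmaDownOpen U → Admissible (PhiMap f ⁻¹' U) := by
  intro U hU
  obtain ⟨hopen, hres⟩ := hU
  constructor
  · intro C
    have hcont : Continuous
        (fun φ : Character (C.alg.map f) => φ.comp (corestrict f C.alg)) := by
      apply continuous_induced_rng.mpr
      apply continuous_pi
      intro x
      exact (continuous_apply ((corestrict f C.alg) x)).comp continuous_induced_dom
    exact hcont.isOpen_preimage _ (hopen C)
  · intro C D h φ hφ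
    have key := hres C D h (φ.comp (corestrict f C.alg)) hφ
    have heq : resChar h (φ.comp (corestrict f C.alg)) =
        (resChar (StarSubalgebra.map_mono h) φ).comp (corestrict f D.alg) := by
      ext x; rfl
    simpa [PhiMap, heq] using key

end
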